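/- arXiv:1301.4396 — 2 statements merged into one kernel-verified Lean document; each statement's English description precedes it below -/
import Mathlib

section
/- Let a, b > 0. Then limsup_{λ→∞} ( card{(m,n) ∈ ℤ_{≥0} × ℤ_{≥0} : m²π²/(4a²) + n²π²/(4b²) ≤ λ} − (ab/π)λ − (2(a+b)/π)√λ ) / √λ ≤ 0; that is, the number of such lattice points is at most (ab/π)λ + (2a/π)√λ + (2b/π)√λ + o(√λ) as λ → ∞. -/
/-!
After rescaling by `√λ` the region is the quarter ellipse `(x/A)² + (y/B)² ≤ 1` with
`A = 2a√λ/π`, `B = 2b√λ/π`, of area `πAB/4 = abλ/π`. Counting its lattice points column by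
column gives at most `∑_{m ≤ A} (g m + 1)` for the decreasing profile `g x = B√(1 - (x/A)²)`,
and comparing this sum with `∫₀^A g` bounds it by `πAB/4 + g 0 + A + 1 = abλ/π + A + B + 1`.
The remaining `1` is `o(√λ)`.
-/

open Filter Real Finset

def latticeUnderGraph (A : ℝ) (g : ℝ → ℝ) : Set (ℕ × ℕ) :=
  {p | (p.1 : ℝ) ≤ A ∧ (p.2 : ℝ) ≤ g p.1}

lemma latticeUnderGraph_subset_biUnion (A : ℝ) (g : ℝ → ℝ) :
    latticeUnderGraph A g ⊆
      ↑((range (⌊A⌋₊ + 1)).biUnion fun m => {m} ×ˢ range (⌊g m⌋₊ + 1)) := by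
  rintro ⟨m, n⟩ ⟨hm, hn⟩
  simp only [coe_biUnion, Set.mem_iUnion, mem_coe, mem_range, mem_product, mem_singleton]
  exact ⟨m, Nat.lt_succ_of_le (Nat.le_floor hm), rfl, Nat.lt_succ_of_le (Nat.le_floor hn)⟩

lemma latticeUnderGraph_finite (A : ℝ) (g : ℝ → ℝ) : (latticeUnderGraph A g).Finite :=
  (Finset.finite_toSet _).subset (latticeUnderGraph_subset_biUnion A g)

lemma natCard_latticeUnderGraph_le {A : ℝ} {g : ℝ → ℝ} (hA : 0 ≤ A)
    (hg : ∀ x ∈ Set.Icc 0 A, 0 ≤ g x) :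
    (Nat.card (latticeUnderGraph A g) : ℝ) ≤ ∑ m ∈ range (⌊A⌋₊ + 1), (g m + 1) := by
  have hcard := Nat.card_mono (Finset.finite_toSet _) (latticeUnderGraph_subset_biUnion A g)
  simp only [Nat.card_coe_set_eq, Set.ncard_coe_finset] at hcard ⊢
  calc ((latticeUnderGraph A g).ncard : ℝ)
      ≤ ∑ m ∈ range (⌊A⌋₊ + 1), ((⌊g m⌋₊ : ℝ) + 1) := by
        refine (Nat.cast_le.mpr (hcard.trans card_biUnion_le)).trans_eq ?_
        simp
    _ ≤ ∑ m ∈ range (⌊A⌋₊ + 1), (g m + 1) := by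
        gcongr with m hm
        have hmA : (m : ℝ) ≤ A := (Nat.le_floor_iff hA).mp (Nat.lt_succ_iff.mp (mem_range.mp hm))
        exact Nat.floor_le (hg m ⟨m.cast_nonneg, hmA⟩)

lemma AntitoneOn.sum_range_floor_add_one_le_add_integral {A : ℝ} {g : ℝ → ℝ} (hA : 0 ≤ A)
    (hanti : AntitoneOn g (Set.Icc 0 A)) (hg : ∀ x ∈ Set.Icc 0 A, 0 ≤ g x) :
    ∑ m ∈ range (⌊A⌋₊ + 1), g m ≤ g 0 + ∫ x in (0 : ℝ)..A, g x := by
  have hNA : (⌊A⌋₊ : ℝ) ≤ A := Nat.floor_le hA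
  have hsum : ∑ i ∈ range ⌊A⌋₊, g ((0 : ℝ) + ↑(i + 1)) ≤ ∫ x in (0 : ℝ)..0 + ⌊A⌋₊, g x :=
    (hanti.mono (Set.Icc_subset_Icc_right (by simpa using hNA))).sum_le_integral
  have hmono : ∫ x in (0 : ℝ)..⌊A⌋₊, g x ≤ ∫ x in (0 : ℝ)..A, g x :=
    intervalIntegral.integral_mono_interval le_rfl (Nat.cast_nonneg _) hNA
      (MeasureTheory.ae_restrict_of_forall_mem measurableSet_Ioc
        fun x hx => hg x (Set.Ioc_subset_Icc_self hx))
      (AntitoneOn.intervalIntegrable (by rwa [Set.uIcc_of_le hA]))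
  rw [sum_range_succ']
  simp only [zero_add] at hsum
  push_cast at hsum ⊢
  linarith

lemma integral_sqrt_one_sub_sq_zero_one : ∫ x in (0 : ℝ)..1, √(1 - x ^ 2) = π / 4 := by
  have hcont : Continuous fun x : ℝ => √(1 - x ^ 2) := by fun_prop
  have hsplit := intervalIntegral.integral_add_adjacent_intervals
    (hcont.intervalIntegrable (μ := MeasureTheory.volume) (-1) 0) (hcont.intervalIntegrable 0 1)
  have hneg := intervalIntegral.integral_comp_neg (a := (0 : ℝ)) (b := 1) fun x => √(1 - x ^ 2)
  simp only [neg_sq, neg_zero] at hneg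
  rw [← hneg, integral_sqrt_one_sub_sq] at hsplit
  linarith

lemma integral_mul_sqrt_one_sub_div_sq {A : ℝ} (hA : 0 < A) (B : ℝ) :
    ∫ x in (0 : ℝ)..A, B * √(1 - (x / A) ^ 2) = π * A * B / 4 := by
  rw [intervalIntegral.integral_const_mul,
    intervalIntegral.integral_comp_div (fun x => √(1 - x ^ 2)) hA.ne',
    zero_div, div_self hA.ne', integral_sqrt_one_sub_sq_zero_one, smul_eq_mul]
  ring

lemma natCard_quarterEllipse_le {A B : ℝ} (hA : 0 < A) (hB : 0 < B) :
    (Nat.card {p : ℕ × ℕ | ((p.1 : ℝ) / A) ^ 2 + ((p.2 : ℝ) / B) ^ 2 ≤ 1} : ℝ)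
      ≤ π * A * B / 4 + A + B + 1 := by
  set g : ℝ → ℝ := fun x => B * √(1 - (x / A) ^ 2) with hg
  have hg_nonneg : ∀ x ∈ Set.Icc 0 A, 0 ≤ g x := fun x _ => by positivity
  have hanti : AntitoneOn g (Set.Icc 0 A) := fun x hx y hy hxy => by
    have : (x / A) ^ 2 ≤ (y / A) ^ 2 := by
      gcongr
      exact div_nonneg hx.1 hA.le
    simp only [hg]
    gcongr
  have hsub : {p : ℕ × ℕ | ((p.1 : ℝ) / A) ^ 2 + ((p.2 : ℝ) / B) ^ 2 ≤ 1} ⊆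
      latticeUnderGraph A g := by
    rintro ⟨m, n⟩ hmn
    simp only [Set.mem_ofPred_eq] at hmn
    refine ⟨?_, ?_⟩
    · have hm : ((m : ℝ) / A) ^ 2 ≤ 1 := by linarith [sq_nonneg ((n : ℝ) / B)]
      exact (div_le_one hA).mp ((sq_le_one_iff₀ (by positivity)).mp hm)
    · exact (div_le_iff₀' hB).mp (Real.le_sqrt_of_sq_le (by linarith))
  calc (Nat.card {p : ℕ × ℕ | ((p.1 : ℝ) / A) ^ 2 + ((p.2 : ℝ) / B) ^ 2 ≤ 1} : ℝ)
      ≤ Nat.card (latticeUnderGraph A g) :=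
        Nat.cast_le.mpr (Nat.card_mono (latticeUnderGraph_finite A g) hsub)
    _ ≤ ∑ m ∈ range (⌊A⌋₊ + 1), (g m + 1) := natCard_latticeUnderGraph_le hA.le hg_nonneg
    _ = ∑ m ∈ range (⌊A⌋₊ + 1), g m + (⌊A⌋₊ + 1) := by simp [sum_add_distrib]
    _ ≤ g 0 + (∫ x in (0 : ℝ)..A, g x) + (A + 1) :=
      add_le_add (hanti.sum_range_floor_add_one_le_add_integral hA.le hg_nonneg)
        (by linarith [Nat.floor_le hA.le])
    _ = π * A * B / 4 + A + B + 1 := by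
      have hg0 : g 0 = B := by simp [hg]
      rw [hg0, integral_mul_sqrt_one_sub_div_sq hA]
      ring

lemma sq_div_two_mul_sqrt_div_pi {a lam : ℝ} (ha : a ≠ 0) (hlam : 0 ≤ lam) (x : ℝ) :
    (x / (2 * a * √lam / π)) ^ 2 = x ^ 2 * π ^ 2 / (4 * a ^ 2) / lam := by
  rw [div_pow, div_pow, mul_pow, mul_pow, sq_sqrt hlam]
  field_simp
  ring

lemma setOf_le_eq_quarterEllipse {a b lam : ℝ} (ha : a ≠ 0) (hb : b ≠ 0) (hlam : 0 < lam) :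
    {p : ℕ × ℕ | (p.1 : ℝ) ^ 2 * π ^ 2 / (4 * a ^ 2) + (p.2 : ℝ) ^ 2 * π ^ 2 / (4 * b ^ 2) ≤ lam}
      = {p : ℕ × ℕ | ((p.1 : ℝ) / (2 * a * √lam / π)) ^ 2
          + ((p.2 : ℝ) / (2 * b * √lam / π)) ^ 2 ≤ 1} := by
  ext p
  simp only [Set.mem_ofPred_eq, sq_div_two_mul_sqrt_div_pi ha hlam.le,
    sq_div_two_mul_sqrt_div_pi hb hlam.le, ← add_div, div_le_one hlam]

/-- Upper bound for counting lattice points `(m,n)`, `m,n ≥ 0`, with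
`m²π²/(4a²) + n²π²/(4b²) ≤ λ`: the count is at most
`(ab/π)λ + (2a/π)√λ + (2b/π)√λ + o(√λ)` as `λ → ∞`. -/
theorem lattice_count_neumann_square_upper (a b : ℝ) (ha : 0 < a) (hb : 0 < b) :
    ∀ ε > 0, ∀ᶠ (lam : ℝ) in atTop,
      ((Nat.card {p : ℕ × ℕ |
          (p.1 : ℝ) ^ 2 * π ^ 2 / (4 * a ^ 2)
            + (p.2 : ℝ) ^ 2 * π ^ 2 / (4 * b ^ 2) ≤ lam} : ℝ))
        ≤ a * b / π * lam + 2 * a / π * Real.sqrt lam + 2 * b / π * Real.sqrt lam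
            + ε * Real.sqrt lam := by
  intro ε hε
  filter_upwards [eventually_gt_atTop 0,
    (tendsto_sqrt_atTop.const_mul_atTop hε).eventually_ge_atTop 1] with lam hlam hone
  rw [setOf_le_eq_quarterEllipse ha.ne' hb.ne' hlam]
  have hcount := natCard_quarterEllipse_le (A := 2 * a * √lam / π) (B := 2 * b * √lam / π)
    (by positivity) (by positivity)
  have harea : π * (2 * a * √lam / π) * (2 * b * √lam / π) / 4 = a * b / π * lam := by
    field_simp
    rw [sq_sqrt hlam.le]
    ring
  calc _ ≤ _ := hcount
    _ = a * b / π * lam + 2 * a / π * √lam + 2 * b / π * √lam + 1 := by rw [harea]; ring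
    _ ≤ _ := by gcongr
end

section
/- Let 0 < δ < h and let U = {(x,y) ∈ ℝ² : x > 0, y < δ/2}. On U define t₀(x,y) = (δ/2 − y)/x + √( ((δ/2 − y)/x)² + 1 ), σ(x,y) = ((h−δ)/4)( t₀√(t₀² + 1) + arsinh(t₀) − √2 − arsinh(1) ), and s(x,y) = −((t₀² + 1)/(2 t₀)) ( x − ((h−δ)/2) t₀ ). Then the map (x,y) ↦ (σ(x,y), s(x,y)) is differentiable on U and the absolute value of its Jacobian determinant equals √2 (h − δ) ( (δ − 2y)² + 4x² )^{1/4} / ( √((δ − 2y)² + 4x²) − δ + 2y )^{3/2} at every point of U. -/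
/-!
Write `t = exp (arsinh u)` with `u = (δ/2 - y)/x`; this is `t₀`. The map has the shape
`(x, y) ↦ (f t, g t * (x - c t))`, and for every map of this shape the Jacobian determinant
is `-f'(t) g(t) ∂t/∂y`: the `x`-derivative of `t` cancels. Here `f' = (h - δ)/2 · √(t² + 1)`
because `σ` is arc length, `g t = -(t² + 1)/(2t)` and `∂t/∂y = -2t²/(x(t² + 1))`, so the
determinant is `-(h - δ) t √(t² + 1)/(2x)`. Since `δ - 2y = x(t - t⁻¹)`, one has
`√((δ - 2y)² + 4x²) = x(t + t⁻¹)` and `√((δ - 2y)² + 4x²) - (δ - 2y) = 2x/t`, which turns this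
into the stated expression.
-/

/-- The skeleton coordinates `(σ, s)` associated to a parabolic edge of the skeleton of a
Rooms and Passages domain with room side `h` and passage height `δ`:
`σ` is arc length along the parabola measured from the point with `x = (h−δ)/2` and `s`
is the signed distance to the projection on the parabola along the ray from `(0, δ/2)`. -/
noncomputable def skeletonCoords (h δ : ℝ) : ℝ × ℝ → ℝ × ℝ := fun q =>
  let t₀ := (δ / 2 - q.2) / q.1 + Real.sqrt (((δ / 2 - q.2) / q.1) ^ 2 + 1)
  (((h - δ) / 4) * (t₀ * Real.sqrt (t₀ ^ 2 + 1) + Real.arsinh t₀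
      - Real.sqrt 2 - Real.arsinh 1),
   -((t₀ ^ 2 + 1) / (2 * t₀)) * (q.1 - (h - δ) / 2 * t₀))

open Real

theorem LinearMap.det_prod {R : Type*} [CommRing R] (L : (R × R) →ₗ[R] (R × R)) :
    LinearMap.det L = (L (1, 0)).1 * (L (0, 1)).2 - (L (0, 1)).1 * (L (1, 0)).2 := by
  rw [← LinearMap.det_toMatrix (Module.Basis.finTwoProd R), Matrix.det_fin_two]
  simp [LinearMap.toMatrix_apply, Module.Basis.coe_finTwoProd_repr]

theorem det_fderiv_prodMk_mul_fst_sub {𝕜 : Type*} [NontriviallyNormedField 𝕜]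
    {f g : 𝕜 → 𝕜} {τ : 𝕜 × 𝕜 → 𝕜} {f' : 𝕜} {p : 𝕜 × 𝕜} (c : 𝕜)
    (hf : HasDerivAt f f' (τ p)) (hg : DifferentiableAt 𝕜 g (τ p))
    (hτ : DifferentiableAt 𝕜 τ p) :
    DifferentiableAt 𝕜 (fun q => (f (τ q), g (τ q) * (q.1 - c * τ q))) p ∧
      LinearMap.det (fderiv 𝕜 (fun q => (f (τ q), g (τ q) * (q.1 - c * τ q))) p).toLinearMap
        = -(f' * g (τ p) * deriv (fun y => τ (p.1, y)) p.2) := by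
  have hF : HasFDerivAt (fun q => (f (τ q), g (τ q) * (q.1 - c * τ q))) _ p :=
    (hf.comp_hasFDerivAt p hτ.hasFDerivAt).prodMk
    ((hg.hasDerivAt.comp_hasFDerivAt p hτ.hasFDerivAt).mul
      (hasFDerivAt_fst.sub (hτ.hasFDerivAt.const_mul c)))
  have hτy : HasDerivAt (fun y => τ (p.1, y)) (fderiv 𝕜 τ p (0, 1)) p.2 :=
    hτ.hasFDerivAt.comp_hasDerivAt p.2 ((hasDerivAt_const p.2 p.1).prodMk (hasDerivAt_id p.2))
  refine ⟨hF.differentiableAt, ?_⟩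
  rw [hF.fderiv, LinearMap.det_prod, hτy.deriv]
  simp only [Function.comp_apply, ContinuousLinearMap.coe_prod,
    ContinuousLinearMap.toLinearMap_smul, ContinuousLinearMap.toLinearMap_add,
    ContinuousLinearMap.toLinearMap_sub, ContinuousLinearMap.coe_fst, LinearMap.prod_apply,
    LinearMap.coe_smul, ContinuousLinearMap.coe_coe, Function.prod_apply,
    Pi.smul_apply, smul_eq_mul, LinearMap.add_apply, LinearMap.smul_apply, LinearMap.sub_apply,
    LinearMap.fst_apply]
  ring

theorem hasDerivAt_mul_sqrt_add_arsinh (t : ℝ) :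
    HasDerivAt (fun t => t * √(t ^ 2 + 1) + arsinh t) (2 * √(t ^ 2 + 1)) t := by
  have hpos : 0 < t ^ 2 + 1 := by positivity
  refine (((hasDerivAt_id' t).mul (((hasDerivAt_pow 2 t).add_const 1).sqrt hpos.ne')).add
    (hasDerivAt_arsinh t)).congr_deriv ?_
  rw [add_comm 1 (t ^ 2)]
  have hs := sq_sqrt hpos.le
  field_simp
  linear_combination -2 * hs

namespace Real

theorem exp_arsinh_sub_inv (u : ℝ) : exp (arsinh u) - (exp (arsinh u))⁻¹ = 2 * u := by
  rw [← exp_neg]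
  linarith [sinh_eq (arsinh u), sinh_arsinh u]

theorem exp_arsinh_add_inv (u : ℝ) :
    exp (arsinh u) + (exp (arsinh u))⁻¹ = 2 * √(1 + u ^ 2) := by
  rw [← exp_neg]
  linarith [cosh_eq (arsinh u), cosh_arsinh u]

end Real

theorem sqrt_two_mul_rpow_div_rpow_eq {a x t d : ℝ} (hx : 0 < x) (ht : 0 < t)
    (hd : d = x * (t - t⁻¹)) :
    √2 * a * (d ^ 2 + 4 * x ^ 2) ^ ((1 : ℝ) / 4) / (√(d ^ 2 + 4 * x ^ 2) - d) ^ ((3 : ℝ) / 2)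
      = a * t * √(t ^ 2 + 1) / (2 * x) := by
  have hpos : 0 < x * (t + t⁻¹) := by positivity
  have hsq : d ^ 2 + 4 * x ^ 2 = (x * (t + t⁻¹)) ^ 2 := by
    rw [hd]; field_simp; ring
  have hsub : √(d ^ 2 + 4 * x ^ 2) - d = 2 * x / t := by
    rw [hsq, sqrt_sq hpos.le, hd]; field_simp; ring
  have hquarter : ((x * (t + t⁻¹)) ^ 2) ^ ((1 : ℝ) / 4) = √(x * (t + t⁻¹)) := by
    rw [← rpow_natCast, ← rpow_mul hpos.le, sqrt_eq_rpow]; norm_num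
  have hthreehalves : (2 * x / t) ^ ((3 : ℝ) / 2) = 2 * x / t * √(2 * x / t) := by
    rw [sqrt_eq_rpow, ← rpow_one_add' (by positivity) (by norm_num)]; norm_num
  have hsqrt : √2 * √(x * (t + t⁻¹)) = √(t ^ 2 + 1) * √(2 * x / t) := by
    rw [← sqrt_mul zero_le_two, ← sqrt_mul (by positivity)]
    congr 1
    field_simp
  rw [hsub, hsq, hquarter, hthreehalves, mul_right_comm, hsqrt]
  field_simp

-- `t₀ = u + √(u ^ 2 + 1)` written as `exp (arsinh u)` (`Real.exp_arsinh`), so that `u` and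
-- `√(1 + u ^ 2)` are `sinh` and `cosh` of `log t₀`.
noncomputable def skeletonParam (δ : ℝ) (q : ℝ × ℝ) : ℝ :=
  exp (arsinh ((δ / 2 - q.2) / q.1))

theorem skeletonParam_pos (δ : ℝ) (q : ℝ × ℝ) : 0 < skeletonParam δ q := exp_pos _

theorem skeletonCoords_eq (h δ : ℝ) :
    skeletonCoords h δ = fun q =>
      ((h - δ) / 4 * (skeletonParam δ q * √(skeletonParam δ q ^ 2 + 1)
          + arsinh (skeletonParam δ q) - √2 - arsinh 1),
        -((skeletonParam δ q ^ 2 + 1) / (2 * skeletonParam δ q))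
          * (q.1 - (h - δ) / 2 * skeletonParam δ q)) := by
  funext q
  simp only [skeletonCoords, skeletonParam, exp_arsinh, add_comm (1 : ℝ)]

theorem differentiableAt_skeletonParam {δ : ℝ} {q : ℝ × ℝ} (hq : q.1 ≠ 0) :
    DifferentiableAt ℝ (skeletonParam δ) q := by
  unfold skeletonParam
  fun_prop (disch := exact hq)

theorem hasDerivAt_skeletonParam_snd {δ x y : ℝ} (hx : x ≠ 0) :
    HasDerivAt (fun y => skeletonParam δ (x, y))
      (-(2 * skeletonParam δ (x, y) ^ 2 / (x * (skeletonParam δ (x, y) ^ 2 + 1)))) y := by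
  have hu : HasDerivAt (fun y => (δ / 2 - y) / x) (-1 / x) y :=
    ((hasDerivAt_id y).const_sub (δ / 2)).div_const x
  refine ((hasDerivAt_arsinh _).comp y hu).exp.congr_deriv ?_
  have hcosh := exp_arsinh_add_inv ((δ / 2 - y) / x)
  have ht := exp_pos (arsinh ((δ / 2 - y) / x))
  have hr : 0 < √(1 + ((δ / 2 - y) / x) ^ 2) := by positivity
  simp only [skeletonParam, Function.comp_apply]
  generalize exp (arsinh ((δ / 2 - y) / x)) = t at hcosh ht ⊢
  generalize √(1 + ((δ / 2 - y) / x) ^ 2) = r at hcosh hr ⊢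
  field_simp at hcosh ⊢
  rw [hcosh]

theorem sub_two_mul_eq_skeletonParam {δ x y : ℝ} (hx : x ≠ 0) :
    δ - 2 * y = x * (skeletonParam δ (x, y) - (skeletonParam δ (x, y))⁻¹) := by
  simp only [skeletonParam, exp_arsinh_sub_inv]
  field_simp

theorem skeleton_coords_jacobian_general (h δ : ℝ) (hh : δ < h) :
    ∀ p : ℝ × ℝ, 0 < p.1 → p.2 < δ / 2 →
      DifferentiableAt ℝ (skeletonCoords h δ) p ∧
      |LinearMap.det ((fderiv ℝ (skeletonCoords h δ) p).toLinearMap)|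
        = Real.sqrt 2 * (h - δ)
            * ((δ - 2 * p.2) ^ 2 + 4 * p.1 ^ 2) ^ ((1 : ℝ) / 4)
            / (Real.sqrt ((δ - 2 * p.2) ^ 2 + 4 * p.1 ^ 2) - δ + 2 * p.2)
                ^ ((3 : ℝ) / 2) := by
  rintro ⟨x, y⟩ (hx : 0 < x) -
  have ht := skeletonParam_pos δ (x, y)
  have hσ := ((hasDerivAt_mul_sqrt_add_arsinh (skeletonParam δ (x, y))).sub_const (√2)
    |>.sub_const (arsinh 1)).const_mul ((h - δ) / 4)
  obtain ⟨hdiff, hdet⟩ := det_fderiv_prodMk_mul_fst_sub ((h - δ) / 2) hσ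
    (g := fun t => -((t ^ 2 + 1) / (2 * t)))
    (by fun_prop (disch := exact mul_ne_zero two_ne_zero ht.ne'))
    (differentiableAt_skeletonParam (δ := δ) (q := (x, y)) hx.ne')
  rw [skeletonCoords_eq]
  refine ⟨hdiff, ?_⟩
  rw [hdet]
  dsimp only
  rw [(hasDerivAt_skeletonParam_snd hx.ne').deriv, sub_add,
    sqrt_two_mul_rpow_div_rpow_eq hx ht (sub_two_mul_eq_skeletonParam hx.ne')]
  generalize skeletonParam δ (x, y) = t at ht ⊢
  have hhδ : 0 < h - δ := sub_pos.2 hh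
  rw [← abs_of_pos (by positivity : 0 < (h - δ) * t * √(t ^ 2 + 1) / (2 * x)), ← abs_neg]
  congr 1
  field_simp
  ring

/-- On `U = {(x,y) : x > 0, y < δ/2}` the skeleton coordinate map is differentiable and
the absolute value of its Jacobian determinant is
`√2(h−δ)((δ−2y)²+4x²)^{1/4} / (√((δ−2y)²+4x²) − δ + 2y)^{3/2}`. -/
theorem skeleton_coords_jacobian (h δ : ℝ) (hδ : 0 < δ) (hh : δ < h) :
    ∀ p : ℝ × ℝ, 0 < p.1 → p.2 < δ / 2 →
      DifferentiableAt ℝ (skeletonCoords h δ) p ∧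
      |LinearMap.det ((fderiv ℝ (skeletonCoords h δ) p).toLinearMap)|
        = Real.sqrt 2 * (h - δ)
            * ((δ - 2 * p.2) ^ 2 + 4 * p.1 ^ 2) ^ ((1 : ℝ) / 4)
            / (Real.sqrt ((δ - 2 * p.2) ^ 2 + 4 * p.1 ^ 2) - δ + 2 * p.2)
                ^ ((3 : ℝ) / 2) :=
  skeleton_coords_jacobian_general h δ hh
end
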